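/- arXiv:1307.0830 — 3 statements merged into one kernel-verified Lean document; each statement's English description precedes it below -/
import Mathlib

section
/- Let $T \subseteq \mathbb{R}^3$ be the simplex with finite vertices $(0,0,1)$, $(1,0,2)$, $(0,2,3)$ and one infinite vertex in the direction $e_3$, i.e., $T = \mathrm{conv}\{(0,0,1),(1,0,2),(0,2,3)\} + \mathbb{R}_{\geq 0} e_3$. Then for all $X_1,X_2,X_3 > 0$: $\int_T \frac{3!\, X_1 X_2 X_3}{(1 + a_1 X_1 + a_2 X_2 + a_3 X_3)^4}\, da_1 da_2 da_3 = \frac{2\, X_1 X_2}{(1+X_3)(1+X_1+2X_3)(1+2X_2+3X_3)}$. -/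
open MeasureTheory Pointwise Set Filter

-- linear function derivative
lemma hasDerivAt_linear (c t x : ℝ) : HasDerivAt (fun x => c + t * x) t x := by
  exact (((hasDerivAt_id' x).const_mul t).const_add c).congr_deriv (mul_one t)

-- Lemma C : ∫₀ᵘ (c+tx)⁻² = u/(c(c+tu))
lemma lemC {c t u : ℝ} (hu : 0 ≤ u) (h : ∀ x ∈ Set.Icc 0 u, 0 < c + t * x) :
    ∫ x in (0:ℝ)..u, ((c + t * x) ^ 2)⁻¹ = u / (c * (c + t * u)) := by
  have hc : 0 < c := by simpa using h 0 ⟨le_rfl, hu⟩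
  have huIcc : Set.uIcc (0:ℝ) u = Set.Icc 0 u := Set.uIcc_of_le hu
  have hderiv : ∀ x ∈ Set.uIcc (0:ℝ) u,
      HasDerivAt (fun x => x / (c * (c + t * x))) (((c + t * x) ^ 2)⁻¹) x := by
    intro x hx
    rw [huIcc] at hx
    have hx0 := h x hx
    have hne : c * (c + t * x) ≠ 0 := by positivity
    have hden : HasDerivAt (fun x => c * (c + t * x)) (c * t) x :=
      (hasDerivAt_linear c t x).const_mul c
    have := (hasDerivAt_id' x).fun_div hden hne
    refine this.congr_deriv ?_
    field_simp
    ring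
  have hint : IntervalIntegrable (fun x => ((c + t * x) ^ 2)⁻¹) volume 0 u := by
    apply ContinuousOn.intervalIntegrable
    apply ContinuousOn.inv₀
    · fun_prop
    · intro x hx
      rw [huIcc] at hx
      have := h x hx
      positivity
  rw [intervalIntegral.integral_eq_sub_of_hasDerivAt hderiv hint]
  simp

-- Lemma B : ∫₀ᵘ (c+sy)⁻³ = ((c²)⁻¹ - ((c+su)²)⁻¹)/(2s)
lemma lemB {c s u : ℝ} (hs : 0 < s) (hu : 0 ≤ u) (hc : 0 < c) :
    ∫ y in (0:ℝ)..u, ((c + s * y) ^ 3)⁻¹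
      = ((c ^ 2)⁻¹ - ((c + s * u) ^ 2)⁻¹) / (2 * s) := by
  have huIcc : Set.uIcc (0:ℝ) u = Set.Icc 0 u := Set.uIcc_of_le hu
  have hpos : ∀ y ∈ Set.Icc (0:ℝ) u, 0 < c + s * y := fun y hy => by nlinarith [hy.1]
  have hderiv : ∀ y ∈ Set.uIcc (0:ℝ) u,
      HasDerivAt (fun y => -(((c + s * y) ^ 2)⁻¹ / (2 * s))) (((c + s * y) ^ 3)⁻¹) y := by
    intro y hy
    rw [huIcc] at hy
    have h0 := hpos y hy
    have h1 : HasDerivAt (fun y => (c + s * y) ^ 2) (2 * (c + s * y) * s) y := by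
      simpa using ((hasDerivAt_linear c s y).fun_pow 2)
    have h2 := (h1.fun_inv (by positivity)).div_const (2 * s)
    have h3 := h2.fun_neg
    refine h3.congr_deriv ?_
    field_simp
  have hint : IntervalIntegrable (fun y => ((c + s * y) ^ 3)⁻¹) volume 0 u := by
    apply ContinuousOn.intervalIntegrable
    apply ContinuousOn.inv₀
    · fun_prop
    · intro y hy
      rw [huIcc] at hy
      have := hpos y hy
      positivity
  rw [intervalIntegral.integral_eq_sub_of_hasDerivAt hderiv hint]
  field_simp
  ring

-- Lemma A integrand antiderivative facts
lemma lemA_deriv {c s : ℝ} {b : ℝ} (hs : 0 < s) (hb : 0 < c + s * b) :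
    ∀ z ∈ Set.Ici b, HasDerivAt (fun z => -(((c + s * z) ^ 3)⁻¹ / (3 * s)))
      (((c + s * z) ^ 4)⁻¹) z := by
  intro z hz
  have h0 : 0 < c + s * z := by
    have : b ≤ z := hz
    nlinarith
  have h1 : HasDerivAt (fun z => (c + s * z) ^ 3) (3 * (c + s * z) ^ 2 * s) z := by
    simpa using ((hasDerivAt_linear c s z).fun_pow 3)
  have h2 := ((h1.fun_inv (by positivity)).div_const (3 * s)).fun_neg
  refine h2.congr_deriv ?_
  field_simp

lemma lemA_tendsto {c s : ℝ} (hs : 0 < s) :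
    Tendsto (fun z => -(((c + s * z) ^ 3)⁻¹ / (3 * s))) atTop (nhds 0) := by
  have h1 : Tendsto (fun z : ℝ => c + s * z) atTop atTop :=
    tendsto_atTop_add_const_left _ c (Tendsto.const_mul_atTop hs tendsto_id)
  have h2 : Tendsto (fun z : ℝ => (c + s * z) ^ 3) atTop atTop := (tendsto_pow_atTop (by norm_num : (3:ℕ) ≠ 0)).comp h1
  have h3 := (h2.inv_tendsto_atTop).div_const (3 * s)
  simpa using h3.neg

lemma lemA_int {c s b : ℝ} (hs : 0 < s) (hb : 0 < c + s * b) :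
    IntegrableOn (fun z => ((c + s * z) ^ 4)⁻¹) (Set.Ioi b) := by
  apply integrableOn_Ioi_deriv_of_nonneg' (lemA_deriv hs hb)
  · intro z hz
    have h0 : 0 < c + s * z := by
      have : b < z := hz
      nlinarith
    positivity
  · exact lemA_tendsto hs

lemma lemA {c s b : ℝ} (hs : 0 < s) (hb : 0 < c + s * b) :
    ∫ z in Set.Ioi b, ((c + s * z) ^ 4)⁻¹ = ((c + s * b) ^ 3)⁻¹ / (3 * s) := by
  rw [integral_Ioi_of_hasDerivAt_of_nonneg' (lemA_deriv hs hb) ?_ (lemA_tendsto hs)]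
  · ring
  · intro z hz
    have h0 : 0 < c + s * z := by
      have : b < z := hz
      nlinarith
    positivity

-- integrable bound pieces
lemma int_ind_const {r : ℝ} (a b : ℝ) : Integrable ((Set.Icc a b).indicator (fun _ => r)) := by
  rw [integrable_indicator_iff measurableSet_Icc]
  apply (integrableOn_const_iff (C := r)).mpr
  right
  exact measure_Icc_lt_top

lemma int_ind_tail (C : ℝ) : Integrable ((Set.Ici (1:ℝ)).indicator (fun z => C / z ^ 4)) := by
  rw [integrable_indicator_iff measurableSet_Ici]
  rw [integrableOn_Ici_iff_integrableOn_Ioi]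
  have h := (lemA_int (c := 0) (s := 1) (b := 1) one_pos (by norm_num)).const_mul C
  have : (fun z : ℝ => C / z ^ 4) = fun z => C * ((0 + 1 * z) ^ 4)⁻¹ := by
    funext z; rw [div_eq_mul_inv]; norm_num
  rw [this]
  exact h

noncomputable def φ : ℝ × ℝ × ℝ → (Fin 3 → ℝ) :=
  fun p => (MeasurableEquiv.piFinSuccAbove (fun _ : Fin 3 => ℝ) 0).symm
    (p.1, (MeasurableEquiv.finTwoArrow (α := ℝ)).symm p.2)

lemma φ_mp : MeasurePreserving φ volume volume := by
  have h1 : MeasurePreserving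
      (Prod.map (id : ℝ → ℝ) (MeasurableEquiv.finTwoArrow (α := ℝ)).symm)
      volume volume :=
    (MeasurePreserving.id volume).prod (volume_preserving_finTwoArrow ℝ).symm
  have h2 := (volume_preserving_piFinSuccAbove (fun _ : Fin 3 => ℝ) 0).symm
  exact h2.comp h1

lemma φ_emb : MeasurableEmbedding φ := by
  have h1 : MeasurableEmbedding
      (Prod.map (id : ℝ → ℝ) (MeasurableEquiv.finTwoArrow (α := ℝ)).symm) :=
    (MeasurableEquiv.prodCongr (MeasurableEquiv.refl ℝ)
      (MeasurableEquiv.finTwoArrow (α := ℝ)).symm).measurableEmbedding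
  exact ((MeasurableEquiv.piFinSuccAbove (fun _ : Fin 3 => ℝ) 0).symm).measurableEmbedding.comp h1

lemma φ_apply (p : ℝ × ℝ × ℝ) :
    φ p 0 = p.1 ∧ φ p 1 = p.2.1 ∧ φ p 2 = p.2.2 := by
  exact ⟨rfl, rfl, rfl⟩

lemma T_eq (T : Set (Fin 3 → ℝ))
    (hT : T = convexHull ℝ {(![0, 0, 1] : Fin 3 → ℝ), ![1, 0, 2], ![0, 2, 3]}
      + {c : Fin 3 → ℝ | ∃ μ : ℝ, 0 ≤ μ ∧ c = μ • ![0, 0, 1]}) :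
    T = {a : Fin 3 → ℝ | 0 ≤ a 0 ∧ 0 ≤ a 1 ∧ 2 * a 0 + a 1 ≤ 2 ∧ 1 + a 0 + a 1 ≤ a 2} := by
  rw [hT]
  apply Set.Subset.antisymm
  · -- ⊆
    have hK : convexHull ℝ {(![0, 0, 1] : Fin 3 → ℝ), ![1, 0, 2], ![0, 2, 3]} ⊆
        {a : Fin 3 → ℝ | 0 ≤ a 0 ∧ 0 ≤ a 1 ∧ 2 * a 0 + a 1 ≤ 2 ∧ a 2 = 1 + a 0 + a 1} := by
      apply convexHull_min
      · rintro v (rfl | rfl | rfl) <;> norm_num [Matrix.cons_val_two, Matrix.tail_cons, Matrix.head_cons]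
      · rintro x ⟨hx0, hx1, hx2, hx3⟩ y ⟨hy0, hy1, hy2, hy3⟩ a b ha hb hab
        refine ⟨?_, ?_, ?_, ?_⟩ <;>
          simp only [Pi.add_apply, Pi.smul_apply, smul_eq_mul] <;> nlinarith
    rintro x hx
    rw [Set.mem_add] at hx
    obtain ⟨p, hp, c, ⟨μ, hμ, rfl⟩, rfl⟩ := hx
    obtain ⟨h0, h1, h2, h3⟩ := hK hp
    refine ⟨?_, ?_, ?_, ?_⟩ <;>
      simp only [Pi.add_apply, Pi.smul_apply, smul_eq_mul] <;> norm_num [Matrix.cons_val_two, Matrix.tail_cons, Matrix.head_cons] <;> linarith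
  · -- ⊇
    rintro a ⟨h0, h1, h2, h3⟩
    rw [Set.mem_add]
    refine ⟨![a 0, a 1, 1 + a 0 + a 1], ?_, (a 2 - (1 + a 0 + a 1)) • ![0, 0, 1],
      ⟨a 2 - (1 + a 0 + a 1), by linarith, rfl⟩, ?_⟩
    · have := Finset.centerMass_mem_convexHull (Finset.univ : Finset (Fin 3))
        (w := ![1 - a 0 - a 1 / 2, a 0, a 1 / 2])
        (z := ![(![0, 0, 1] : Fin 3 → ℝ), ![1, 0, 2], ![0, 2, 3]])
        (s := {(![0, 0, 1] : Fin 3 → ℝ), ![1, 0, 2], ![0, 2, 3]})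
        (fun i _ => by fin_cases i <;> simp <;> linarith)
        (by rw [Fin.sum_univ_three]; simp; linarith)
        (fun i _ => by fin_cases i <;> simp)
      convert this using 1
      rw [Finset.centerMass_eq_of_sum_1]
      · rw [Fin.sum_univ_three]
        funext j
        fin_cases j <;> simp <;> ring
      · simp [Fin.sum_univ_three]; ring
    · funext j
      fin_cases j <;> simp <;> ring

set_option maxHeartbeats 2000000 in
lemma main_coord (X0 X1 X2 : ℝ) (h0 : 0 < X0) (h1 : 0 < X1) (h2 : 0 < X2) :
    ∫ p in {p : ℝ × ℝ × ℝ | 0 ≤ p.1 ∧ 0 ≤ p.2.1 ∧ 2 * p.1 + p.2.1 ≤ 2 ∧ 1 + p.1 + p.2.1 ≤ p.2.2},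
      6 * (X0 * X1 * X2) / (1 + p.1 * X0 + p.2.1 * X1 + p.2.2 * X2) ^ 4
    = 2 * X0 * X1 / ((1 + X2) * (1 + X0 + 2 * X2) * (1 + 2 * X1 + 3 * X2)) := by
  set K : ℝ := 6 * (X0 * X1 * X2) with hK
  have hKpos : 0 < K := by positivity
  set C : ℝ := K / X2 ^ 4 with hC
  set G : ℝ × ℝ × ℝ → ℝ := fun p => K / (1 + p.1 * X0 + p.2.1 * X1 + p.2.2 * X2) ^ 4 with hG
  set S' : Set (ℝ × ℝ × ℝ) :=
    {p | 0 ≤ p.1 ∧ 0 ≤ p.2.1 ∧ 2 * p.1 + p.2.1 ≤ 2 ∧ 1 + p.1 + p.2.1 ≤ p.2.2} with hS'def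
  have hGmeas : Measurable G := by
    apply Measurable.div measurable_const
    fun_prop
  have hS' : MeasurableSet S' := by
    have : S' = {p : ℝ × ℝ × ℝ | 0 ≤ p.1} ∩ ({p | 0 ≤ p.2.1} ∩
        ({p | 2 * p.1 + p.2.1 ≤ 2} ∩ {p | 1 + p.1 + p.2.1 ≤ p.2.2})) := by
      ext p; simp [hS'def]
    rw [this]
    refine (measurableSet_le measurable_const measurable_fst).inter
      ((measurableSet_le measurable_const (by fun_prop)).inter
        ((measurableSet_le (by fun_prop) measurable_const).inter
          (measurableSet_le (by fun_prop) (by fun_prop))))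
  -- the dominating bound on ℝ × ℝ (inner two coordinates)
  set H2 : ℝ × ℝ → ℝ := fun q => (Set.Icc (0:ℝ) 2).indicator (fun _ => (1:ℝ)) q.1 *
      (Set.Ici (1:ℝ)).indicator (fun z => C / z ^ 4) q.2 with hH2
  have hH2int : Integrable H2 := by
    rw [hH2, MeasureTheory.Measure.volume_eq_prod]
    exact (int_ind_const 0 2).mul_prod (int_ind_tail C)
  have hH2nonneg : ∀ q, 0 ≤ H2 q := by
    intro q
    apply mul_nonneg
    · exact Set.indicator_nonneg (fun _ _ => zero_le_one) _
    · exact Set.indicator_nonneg (fun z _ => by positivity) _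
  -- bound for G in terms of the last coordinate
  have hGbound : ∀ x y z : ℝ, 0 ≤ x → 0 ≤ y → 1 ≤ z →
      K / (1 + x * X0 + y * X1 + z * X2) ^ 4 ≤ C / z ^ 4 := by
    intro x y z hx hy hz
    have hz0 : 0 < z := by linarith
    have hzX : 0 < z * X2 := by positivity
    have hle : z * X2 ≤ 1 + x * X0 + y * X1 + z * X2 := by nlinarith
    have := div_le_div_of_nonneg_left (le_of_lt hKpos) (by positivity : (0:ℝ) < (z * X2) ^ 4)
      (pow_le_pow_left₀ (le_of_lt hzX) hle 4)
    calc K / (1 + x * X0 + y * X1 + z * X2) ^ 4 ≤ K / (z * X2) ^ 4 := this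
      _ = C / z ^ 4 := by rw [hC, div_div]; congr 1; ring
  have hGnonneg : ∀ p, 0 ≤ G p := by
    intro p
    apply div_nonneg (le_of_lt hKpos)
    positivity
  -- 3d dominating function and integrability of the indicator function
  set H3 : ℝ × ℝ × ℝ → ℝ :=
    fun p => (Set.Icc (0:ℝ) 1).indicator (fun _ => (1:ℝ)) p.1 * H2 p.2 with hH3
  have hH3int : Integrable H3 := by
    rw [hH3, MeasureTheory.Measure.volume_eq_prod]
    exact (int_ind_const 0 1).mul_prod hH2int
  set f : ℝ × ℝ × ℝ → ℝ := S'.indicator G with hf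
  have hfmeas : AEStronglyMeasurable f volume := (hGmeas.indicator hS').aestronglyMeasurable
  have hfle : ∀ p, ‖f p‖ ≤ H3 p := by
    intro p
    by_cases hp : p ∈ S'
    · obtain ⟨ha, hb, hc', hd⟩ := id hp
      have hx1 : p.1 ≤ 1 := by linarith
      have hy2 : p.2.1 ≤ 2 := by linarith
      have hz1 : 1 ≤ p.2.2 := by linarith
      rw [hf, Set.indicator_of_mem hp, Real.norm_eq_abs, abs_of_nonneg (hGnonneg p)]
      have hH3p : H3 p = C / p.2.2 ^ 4 := by
        rw [hH3, hH2]
        dsimp only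
        rw [Set.indicator_of_mem (Set.mem_Icc.mpr ⟨ha, hx1⟩),
          Set.indicator_of_mem (Set.mem_Icc.mpr ⟨hb, hy2⟩),
          Set.indicator_of_mem (Set.mem_Ici.mpr hz1), one_mul, one_mul]
      rw [hH3p]
      exact hGbound _ _ _ ha hb hz1
    · rw [hf, Set.indicator_of_notMem hp, norm_zero, hH3]
      exact mul_nonneg (Set.indicator_nonneg (fun _ _ => zero_le_one) _) (hH2nonneg _)
  have hfint : Integrable f := hH3int.mono' hfmeas (Filter.Eventually.of_forall hfle)
  -- explicit one-variable integrand after integrating out y and z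
  set g1 : ℝ → ℝ := fun x => X0 * X1 / (X1 + X2) *
      (((1 + X2 + (X0 + X2) * x) ^ 2)⁻¹
        - ((1 + 2 * X1 + 3 * X2 + (X0 - 2 * X1 - X2) * x) ^ 2)⁻¹) with hg1
  have key1 : ∀ x : ℝ, (∫ q : ℝ × ℝ, f (x, q)) = (Set.Icc (0:ℝ) 1).indicator g1 x := by
    intro x
    by_cases hx : x ∈ Set.Icc (0:ℝ) 1
    swap
    · have hzero : ∀ q : ℝ × ℝ, f (x, q) = 0 := by
        intro q
        rw [hf, Set.indicator_of_notMem]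
        intro hcmem
        obtain ⟨ha, hb, hc', hd⟩ := hcmem
        exact hx (Set.mem_Icc.mpr ⟨ha, by linarith⟩)
      simp [hzero, Set.indicator_of_notMem hx]
    · obtain ⟨hx0, hx1⟩ := Set.mem_Icc.mp hx
      set Sx : Set (ℝ × ℝ) := {q | 0 ≤ q.1 ∧ q.1 ≤ 2 - 2 * x ∧ 1 + x + q.1 ≤ q.2} with hSx
      set Gx : ℝ × ℝ → ℝ := fun q => K / (1 + x * X0 + q.1 * X1 + q.2 * X2) ^ 4 with hGx
      have hfx : ∀ q, f (x, q) = Sx.indicator Gx q := by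
        intro q
        by_cases hq : q ∈ Sx
        · obtain ⟨hq1, hq2, hq3⟩ := id hq
          rw [hf, Set.indicator_of_mem hq, Set.indicator_of_mem]
          exact ⟨hx0, hq1, by linarith, hq3⟩
        · rw [hf, Set.indicator_of_notMem hq, Set.indicator_of_notMem]
          intro hcmem
          obtain ⟨ha, hb, hc', hd⟩ := hcmem
          exact hq ⟨hb, by linarith, hd⟩
      have hSxm : MeasurableSet Sx := by
        have : Sx = {q : ℝ × ℝ | 0 ≤ q.1} ∩ ({q | q.1 ≤ 2 - 2 * x} ∩
            {q | 1 + x + q.1 ≤ q.2}) := by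
          ext q; simp [hSx]
        rw [this]
        refine (measurableSet_le measurable_const measurable_fst).inter
          ((measurableSet_le measurable_fst measurable_const).inter
            (measurableSet_le (by fun_prop) (by fun_prop)))
      have hGxmeas : Measurable Gx := measurable_const.div (by fun_prop)
      have hsecle : ∀ q, ‖Sx.indicator Gx q‖ ≤ H2 q := by
        intro q
        by_cases hq : q ∈ Sx
        · obtain ⟨hq1, hq2, hq3⟩ := id hq
          have hm2 : q.2 ∈ Set.Ici (1:ℝ) := Set.mem_Ici.mpr (by linarith)
          rw [Set.indicator_of_mem hq, Real.norm_eq_abs,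
            abs_of_nonneg (div_nonneg (le_of_lt hKpos) (by positivity)), hH2]
          dsimp only
          rw [Set.indicator_of_mem (Set.mem_Icc.mpr ⟨hq1, by linarith⟩),
            Set.indicator_of_mem hm2, one_mul]
          exact hGbound x q.1 q.2 hx0 hq1 hm2
        · rw [Set.indicator_of_notMem hq, norm_zero]
          exact hH2nonneg q
      have hsecint : Integrable (Sx.indicator Gx) :=
        hH2int.mono' (hGxmeas.indicator hSxm).aestronglyMeasurable
          (Filter.Eventually.of_forall hsecle)
      -- inner (y,z) double integral
      have key2 : ∀ y : ℝ, (∫ z : ℝ, Sx.indicator Gx (y, z))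
          = (Set.Icc (0:ℝ) (2 - 2 * x)).indicator
            (fun y => 2 * (X0 * X1) * (((1 + X2 + (X0 + X2) * x) + (X1 + X2) * y) ^ 3)⁻¹) y := by
        intro y
        by_cases hy : y ∈ Set.Icc (0:ℝ) (2 - 2 * x)
        swap
        · have hzero : ∀ z : ℝ, Sx.indicator Gx (y, z) = 0 := by
            intro z
            rw [Set.indicator_of_notMem]
            intro hcmem
            obtain ⟨hb, hc', hd⟩ := hcmem
            exact hy (Set.mem_Icc.mpr ⟨hb, hc'⟩)
          simp [hzero, Set.indicator_of_notMem hy]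
        · obtain ⟨hy0, hy2⟩ := Set.mem_Icc.mp hy
          have hyz : ∀ z : ℝ, Sx.indicator Gx (y, z)
              = (Set.Ici (1 + x + y)).indicator (fun z => Gx (y, z)) z := by
            intro z
            by_cases hz : z ∈ Set.Ici (1 + x + y)
            · have hmem : (y, z) ∈ Sx := ⟨hy0, hy2, hz⟩
              rw [Set.indicator_of_mem hz, Set.indicator_of_mem hmem]
            · rw [Set.indicator_of_notMem hz, Set.indicator_of_notMem]
              intro hcmem
              exact hz hcmem.2.2
          have e1 : ∀ z : ℝ, Gx (y, z) = K * (((1 + x * X0 + y * X1) + X2 * z) ^ 4)⁻¹ := by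
            intro z
            rw [hGx]
            dsimp only
            rw [div_eq_mul_inv]
            congr 2
            ring
          have hb4 : 0 < (1 + x * X0 + y * X1) + X2 * (1 + x + y) := by
            nlinarith [mul_nonneg hx0 h0.le, mul_nonneg hy0 h1.le,
              mul_nonneg hx0 h2.le, mul_nonneg hy0 h2.le]
          calc (∫ z : ℝ, Sx.indicator Gx (y, z))
              = ∫ z : ℝ, (Set.Ici (1 + x + y)).indicator (fun z => Gx (y, z)) z := by
                simp_rw [hyz]
            _ = ∫ z in Set.Ici (1 + x + y), Gx (y, z) := integral_indicator measurableSet_Ici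
            _ = ∫ z in Set.Ioi (1 + x + y), Gx (y, z) := integral_Ici_eq_integral_Ioi
            _ = ∫ z in Set.Ioi (1 + x + y), K * (((1 + x * X0 + y * X1) + X2 * z) ^ 4)⁻¹ := by
                simp_rw [e1]
            _ = K * ∫ z in Set.Ioi (1 + x + y), (((1 + x * X0 + y * X1) + X2 * z) ^ 4)⁻¹ :=
                MeasureTheory.integral_const_mul _ _
            _ = K * ((((1 + x * X0 + y * X1) + X2 * (1 + x + y)) ^ 3)⁻¹ / (3 * X2)) := by
                rw [lemA h2 hb4]
            _ = 2 * (X0 * X1) * (((1 + X2 + (X0 + X2) * x) + (X1 + X2) * y) ^ 3)⁻¹ := by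
                rw [show (1 + x * X0 + y * X1) + X2 * (1 + x + y)
                    = (1 + X2 + (X0 + X2) * x) + (X1 + X2) * y from by ring, hK]
                field_simp
                ring
            _ = (Set.Icc (0:ℝ) (2 - 2 * x)).indicator
                (fun y => 2 * (X0 * X1) * (((1 + X2 + (X0 + X2) * x) + (X1 + X2) * y) ^ 3)⁻¹) y
              := (Set.indicator_of_mem hy
                (fun y => 2 * (X0 * X1) * (((1 + X2 + (X0 + X2) * x) + (X1 + X2) * y) ^ 3)⁻¹)).symm
      have hc1pos : 0 < 1 + X2 + (X0 + X2) * x := by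
        nlinarith [mul_nonneg hx0 h0.le, mul_nonneg hx0 h2.le]
      calc (∫ q : ℝ × ℝ, f (x, q)) = ∫ q : ℝ × ℝ, Sx.indicator Gx q := by simp_rw [hfx]
        _ = ∫ y : ℝ, ∫ z : ℝ, Sx.indicator Gx (y, z) := by
            rw [show (volume : Measure (ℝ × ℝ)) = volume.prod volume from
              MeasureTheory.Measure.volume_eq_prod ℝ ℝ] at hsecint ⊢
            exact integral_prod _ hsecint
        _ = ∫ y : ℝ, (Set.Icc (0:ℝ) (2 - 2 * x)).indicator
              (fun y => 2 * (X0 * X1) * (((1 + X2 + (X0 + X2) * x) + (X1 + X2) * y) ^ 3)⁻¹) y := by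
            simp_rw [key2]
        _ = ∫ y in Set.Icc (0:ℝ) (2 - 2 * x),
              2 * (X0 * X1) * (((1 + X2 + (X0 + X2) * x) + (X1 + X2) * y) ^ 3)⁻¹ :=
            integral_indicator measurableSet_Icc
        _ = ∫ y in (0:ℝ)..(2 - 2 * x),
              2 * (X0 * X1) * (((1 + X2 + (X0 + X2) * x) + (X1 + X2) * y) ^ 3)⁻¹ := by
            rw [MeasureTheory.integral_Icc_eq_integral_Ioc,
              ← intervalIntegral.integral_of_le (by linarith : (0:ℝ) ≤ 2 - 2 * x)]
        _ = 2 * (X0 * X1) * ∫ y in (0:ℝ)..(2 - 2 * x),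
              (((1 + X2 + (X0 + X2) * x) + (X1 + X2) * y) ^ 3)⁻¹ :=
            intervalIntegral.integral_const_mul _ _
        _ = 2 * (X0 * X1) * ((((1 + X2 + (X0 + X2) * x) ^ 2)⁻¹
              - (((1 + X2 + (X0 + X2) * x) + (X1 + X2) * (2 - 2 * x)) ^ 2)⁻¹) / (2 * (X1 + X2)))
            := by
            rw [lemB (by linarith : (0:ℝ) < X1 + X2) (by linarith : (0:ℝ) ≤ 2 - 2 * x) hc1pos]
        _ = (Set.Icc (0:ℝ) 1).indicator g1 x := by
            rw [Set.indicator_of_mem hx, hg1]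
            rw [show (1 + X2 + (X0 + X2) * x) + (X1 + X2) * (2 - 2 * x)
                = 1 + 2 * X1 + 3 * X2 + (X0 - 2 * X1 - X2) * x from by ring]
            field_simp
  -- positivity of the two one-variable denominators on [0,1]
  have hd1 : ∀ x ∈ Set.Icc (0:ℝ) 1, 0 < 1 + X2 + (X0 + X2) * x := by
    intro x hx
    nlinarith [mul_nonneg hx.1 h0.le, mul_nonneg hx.1 h2.le]
  have hd2 : ∀ x ∈ Set.Icc (0:ℝ) 1, 0 < 1 + 2 * X1 + 3 * X2 + (X0 - 2 * X1 - X2) * x := by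
    intro x hx
    nlinarith [mul_nonneg hx.1 h0.le, mul_nonneg hx.1 h2.le,
      mul_nonneg (sub_nonneg.mpr hx.2) h1.le, mul_nonneg (sub_nonneg.mpr hx.2) h2.le]
  have hii1 : IntervalIntegrable (fun x => ((1 + X2 + (X0 + X2) * x) ^ 2)⁻¹) volume 0 1 := by
    apply ContinuousOn.intervalIntegrable
    apply ContinuousOn.inv₀
    · fun_prop
    · intro x hx
      rw [Set.uIcc_of_le zero_le_one] at hx
      have := hd1 x hx
      positivity
  have hii2 : IntervalIntegrable
      (fun x => ((1 + 2 * X1 + 3 * X2 + (X0 - 2 * X1 - X2) * x) ^ 2)⁻¹) volume 0 1 := by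
    apply ContinuousOn.intervalIntegrable
    apply ContinuousOn.inv₀
    · fun_prop
    · intro x hx
      rw [Set.uIcc_of_le zero_le_one] at hx
      have := hd2 x hx
      positivity
  calc (∫ p in S', G p) = ∫ p, f p := (integral_indicator hS').symm
    _ = ∫ x : ℝ, ∫ q : ℝ × ℝ, f (x, q) := by
        rw [show (volume : Measure (ℝ × ℝ × ℝ)) = volume.prod volume from
          MeasureTheory.Measure.volume_eq_prod ℝ (ℝ × ℝ)] at hfint ⊢
        exact integral_prod _ hfint
    _ = ∫ x : ℝ, (Set.Icc (0:ℝ) 1).indicator g1 x := by simp_rw [key1]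
    _ = ∫ x in Set.Icc (0:ℝ) 1, g1 x := integral_indicator measurableSet_Icc
    _ = ∫ x in (0:ℝ)..1, g1 x := by
        rw [MeasureTheory.integral_Icc_eq_integral_Ioc,
          ← intervalIntegral.integral_of_le zero_le_one]
    _ = X0 * X1 / (X1 + X2) * ∫ x in (0:ℝ)..1,
          (((1 + X2 + (X0 + X2) * x) ^ 2)⁻¹
            - ((1 + 2 * X1 + 3 * X2 + (X0 - 2 * X1 - X2) * x) ^ 2)⁻¹) := by
        rw [hg1]
        exact intervalIntegral.integral_const_mul _ _
    _ = X0 * X1 / (X1 + X2) *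
          ((∫ x in (0:ℝ)..1, ((1 + X2 + (X0 + X2) * x) ^ 2)⁻¹)
            - ∫ x in (0:ℝ)..1, ((1 + 2 * X1 + 3 * X2 + (X0 - 2 * X1 - X2) * x) ^ 2)⁻¹) := by
        rw [intervalIntegral.integral_sub hii1 hii2]
    _ = X0 * X1 / (X1 + X2) *
          (1 / ((1 + X2) * (1 + X2 + (X0 + X2) * 1))
            - 1 / ((1 + 2 * X1 + 3 * X2) * (1 + 2 * X1 + 3 * X2 + (X0 - 2 * X1 - X2) * 1))) := by
        rw [lemC zero_le_one hd1, lemC zero_le_one hd2]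
    _ = 2 * X0 * X1 / ((1 + X2) * (1 + X0 + 2 * X2) * (1 + 2 * X1 + 3 * X2)) := by
        rw [show 1 + X2 + (X0 + X2) * 1 = 1 + X0 + 2 * X2 from by ring,
          show 1 + 2 * X1 + 3 * X2 + (X0 - 2 * X1 - X2) * 1 = 1 + X0 + 2 * X2 from by ring]
        have n1 : (1:ℝ) + X2 ≠ 0 := by positivity
        have n2 : (1:ℝ) + X0 + 2 * X2 ≠ 0 := by positivity
        have n3 : (1:ℝ) + 2 * X1 + 3 * X2 ≠ 0 := by positivity
        have n4 : X1 + X2 ≠ 0 := by positivity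
        field_simp
        ring

theorem example_column_simplex (X : Fin 3 → ℝ) (hX : ∀ i, 0 < X i)
    (T : Set (Fin 3 → ℝ))
    (hT : T = convexHull ℝ {(![0, 0, 1] : Fin 3 → ℝ), ![1, 0, 2], ![0, 2, 3]}
      + {c : Fin 3 → ℝ | ∃ μ : ℝ, 0 ≤ μ ∧ c = μ • ![0, 0, 1]}) :
    ∫ a in T,
      ((Nat.factorial 3 : ℝ) * (X 0 * X 1 * X 2)) /
        (1 + a 0 * X 0 + a 1 * X 1 + a 2 * X 2) ^ 4
    = 2 * X 0 * X 1 /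
        ((1 + X 2) * (1 + X 0 + 2 * X 2) * (1 + 2 * X 1 + 3 * X 2)) := by
  have h0 := hX 0
  have h1 := hX 1
  have h2 := hX 2
  rw [T_eq T hT]
  rw [← φ_mp.setIntegral_preimage_emb φ_emb
    (fun a => ((Nat.factorial 3 : ℝ) * (X 0 * X 1 * X 2)) /
      (1 + a 0 * X 0 + a 1 * X 1 + a 2 * X 2) ^ 4)
    {a : Fin 3 → ℝ | 0 ≤ a 0 ∧ 0 ≤ a 1 ∧ 2 * a 0 + a 1 ≤ 2 ∧ 1 + a 0 + a 1 ≤ a 2}]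
  simp_rw [show ((Nat.factorial 3 : ℝ)) = 6 from by norm_num [Nat.factorial]]
  exact main_coord (X 0) (X 1) (X 2) h0 h1 h2
end

section
/- Let $X_1, X_2 > 0$ and let $N \subseteq \mathbb{R}^2_{\geq 0}$ be the complement in the positive quadrant of the convex hull of $(3,0)+\mathbb{R}^2_{\geq 0}$, $(1,1)+\mathbb{R}^2_{\geq 0}$, and $(0,3)+\mathbb{R}^2_{\geq 0}$ (the Newton region of the monomial ideal $(x^3, xy, y^3)$). Then $1 - \int_N \frac{2!\, X_1 X_2}{(1+a_1X_1+a_2X_2)^3}\, da_1 da_2 = \frac{3X_2}{(1+3X_1)(1+3X_2)} + \frac{1}{1+3X_2} + \frac{3X_1X_2}{(1+3X_1)(1+X_1+X_2)(1+3X_2)}$. -/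
/-!
Identifying `Fin 2 → ℝ` with `ℝ × ℝ`, the region `N` is the set of `(x, y)` with `0 ≤ x ≤ 3` and
`0 ≤ y < φ x`, where `φ x = max (3 - 2x) ((3 - x) / 2)` is the lower boundary of the convex hull.
By Fubini, the `y`-integral of `2 X₁ X₂ / (1 + x X₁ + y X₂)³` over `[0, φ x)` is
`X₁ (1 / (1 + X₁ x)² - 1 / (1 + X₁ x + X₂ φ x)²)`. Since `φ` is affine on `[0, 1]` and on `[1, 3]`,
what is left are integrals of `1 / ℓ²` for affine `ℓ > 0`, and `∫ₐᵇ 1 / ℓ² = (b - a) / (ℓ a ℓ b)`.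
-/

open MeasureTheory Set

theorem setIntegral_region_between_co {α E : Type*} [MeasurableSpace α] [NormedAddCommGroup E]
    [NormedSpace ℝ E] {μ : Measure α} [SFinite μ] {f g : α → ℝ} {s : Set α}
    (hf : Measurable f) (hg : Measurable g) (hs : MeasurableSet s) {F : α × ℝ → E}
    (hF : IntegrableOn F {p | p.1 ∈ s ∧ p.2 ∈ Ico (f p.1) (g p.1)} (μ.prod volume)) :
    ∫ p in {p : α × ℝ | p.1 ∈ s ∧ p.2 ∈ Ico (f p.1) (g p.1)}, F p ∂(μ.prod volume)
      = ∫ x in s, (∫ y in Ico (f x) (g x), F (x, y)) ∂μ := by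
  have hR := measurableSet_region_between_co hf hg hs
  rw [← integral_indicator hR, integral_prod _ ((integrable_indicator_iff hR).2 hF),
    ← integral_indicator hs]
  congr 1
  funext x
  by_cases hx : x ∈ s
  · rw [indicator_of_mem hx, ← integral_indicator measurableSet_Ico]
    congr 1
    funext y
    simp [Set.indicator, hx]
  · simp [hx]

theorem affine_pos_of_mem_uIcc {a b c d x : ℝ} (ha : 0 < c + d * a) (hb : 0 < c + d * b)
    (hx : x ∈ uIcc a b) : 0 < c + d * x := by
  rw [mem_uIcc] at hx
  rcases hx with ⟨h1, h2⟩ | ⟨h1, h2⟩ <;> rcases le_total 0 d with hd | hd <;> nlinarith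

theorem intervalIntegrable_one_div_affine_sq {a b c d : ℝ} (ha : 0 < c + d * a)
    (hb : 0 < c + d * b) : IntervalIntegrable (fun x => 1 / (c + d * x) ^ 2) volume a b :=
  ContinuousOn.intervalIntegrable <| continuousOn_const.div (by fun_prop) fun _ hx =>
    pow_ne_zero 2 (affine_pos_of_mem_uIcc ha hb hx).ne'

theorem integral_one_div_affine_sq {a b c d : ℝ} (ha : 0 < c + d * a) (hb : 0 < c + d * b) :
    ∫ x in a..b, 1 / (c + d * x) ^ 2 = (b - a) / ((c + d * a) * (c + d * b)) := by
  have hpos : ∀ x ∈ uIcc a b, c + d * x ≠ 0 := fun _ hx => (affine_pos_of_mem_uIcc ha hb hx).ne'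
  -- unlike `-1 / (d (c + d x))`, this antiderivative also covers `d = 0`
  have hderiv : ∀ x ∈ uIcc a b,
      HasDerivAt (fun x => (x - a) / ((c + d * a) * (c + d * x))) (1 / (c + d * x) ^ 2) x := by
    intro x hx
    refine (((hasDerivAt_id' x).sub_const a).div
      (((hasDerivAt_id' x).const_mul d).const_add c |>.const_mul (c + d * a))
      (mul_ne_zero ha.ne' (hpos x hx))).congr_deriv ?_
    field_simp
    ring
  rw [intervalIntegral.integral_eq_sub_of_hasDerivAt hderiv
    (intervalIntegrable_one_div_affine_sq ha hb)]
  simp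

theorem integral_two_mul_div_affine_cube {a b c d : ℝ} (ha : 0 < c + d * a) (hb : 0 < c + d * b) :
    ∫ x in a..b, 2 * d / (c + d * x) ^ 3 = 1 / (c + d * a) ^ 2 - 1 / (c + d * b) ^ 2 := by
  have hpos : ∀ x ∈ uIcc a b, c + d * x ≠ 0 := fun _ hx => (affine_pos_of_mem_uIcc ha hb hx).ne'
  have hderiv : ∀ x ∈ uIcc a b,
      HasDerivAt (fun x => -((c + d * x) ^ 2)⁻¹) (2 * d / (c + d * x) ^ 3) x := by
    intro x hx
    refine ((((hasDerivAt_id' x).const_mul d).const_add c).pow 2).inv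
      (pow_ne_zero 2 (hpos x hx)) |>.neg |>.congr_deriv ?_
    have := hpos x hx
    simp only [Pi.pow_apply, Nat.cast_ofNat]
    field_simp
    ring
  have hcont : ContinuousOn (fun x => 2 * d / (c + d * x) ^ 3) (uIcc a b) :=
    continuousOn_const.div (by fun_prop) fun x hx => pow_ne_zero 3 (hpos x hx)
  rw [intervalIntegral.integral_eq_sub_of_hasDerivAt hderiv hcont.intervalIntegrable]
  ring

theorem setIntegral_Ico_two_mul_div_affine_cube {c d h : ℝ} (hc : 0 < c) (hd : 0 ≤ d)
    (hh : 0 ≤ h) : ∫ y in Ico 0 h, 2 * d / (c + d * y) ^ 3 = 1 / c ^ 2 - 1 / (c + d * h) ^ 2 := by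
  rw [integral_Ico_eq_integral_Ioo, ← integral_Ioc_eq_integral_Ioo,
    ← intervalIntegral.integral_of_le hh,
    integral_two_mul_div_affine_cube (by simpa using hc) (by positivity), mul_zero, add_zero]

noncomputable def newtonBoundary (x : ℝ) : ℝ := max (3 - 2 * x) ((3 - x) / 2)

theorem newtonBoundary_of_le_one {x : ℝ} (hx : x ≤ 1) : newtonBoundary x = 3 - 2 * x :=
  max_eq_left (by linarith)

theorem newtonBoundary_of_one_le {x : ℝ} (hx : 1 ≤ x) : newtonBoundary x = (3 - x) / 2 :=
  max_eq_right (by linarith)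

theorem newtonBoundary_nonneg {x : ℝ} (hx : x ≤ 3) : 0 ≤ newtonBoundary x :=
  le_max_of_le_right (by linarith)

theorem newtonBoundary_le_three {x : ℝ} (hx : 0 ≤ x) : newtonBoundary x ≤ 3 :=
  max_le (by linarith) (by linarith)

@[fun_prop]
theorem continuous_newtonBoundary : Continuous newtonBoundary := by
  unfold newtonBoundary; fun_prop

theorem convexHull_newtonPolygon :
    convexHull ℝ ({a : Fin 2 → ℝ | 3 ≤ a 0 ∧ 0 ≤ a 1} ∪ {a : Fin 2 → ℝ | 1 ≤ a 0 ∧ 1 ≤ a 1}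
        ∪ {a : Fin 2 → ℝ | 0 ≤ a 0 ∧ 3 ≤ a 1})
    = {a : Fin 2 → ℝ | 0 ≤ a 0 ∧ 0 ≤ a 1 ∧ 3 ≤ a 0 + 2 * a 1 ∧ 3 ≤ 2 * a 0 + a 1} := by
  set S := {a : Fin 2 → ℝ | 3 ≤ a 0 ∧ 0 ≤ a 1} ∪ {a : Fin 2 → ℝ | 1 ≤ a 0 ∧ 1 ≤ a 1}
    ∪ {a : Fin 2 → ℝ | 0 ≤ a 0 ∧ 3 ≤ a 1}
  apply Subset.antisymm
  · refine convexHull_min ?_ ?_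
    · rintro a ((⟨h0, h1⟩ | ⟨h0, h1⟩) | ⟨h0, h1⟩) <;>
        exact ⟨by linarith, by linarith, by linarith, by linarith⟩
    · rintro p ⟨hp0, hp1, hp2, hp3⟩ q ⟨hq0, hq1, hq2, hq3⟩ s t hs ht hst
      simp only [mem_ofPred_eq, Pi.add_apply, Pi.smul_apply, smul_eq_mul]
      refine ⟨by positivity, by positivity, ?_, ?_⟩ <;> nlinarith
  · rintro a ⟨h0, h1, h2, h3⟩
    have corner : ![1, 1] ∈ convexHull ℝ S := subset_convexHull ℝ S (Or.inl (Or.inr (by simp)))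
    -- unless `a` lies above the corner `(1, 1)`, it is on a segment from the corner to an axis
    by_cases hx : a 0 < 1
    · have hx' : 0 < 1 - a 0 := by linarith
      have ha : a = (1 - a 0) • ![0, (a 1 - a 0) / (1 - a 0)] + a 0 • ![1, 1] := by
        ext i
        fin_cases i <;> simp [field]
      rw [ha]
      refine convex_convexHull ℝ S (subset_convexHull ℝ S (Or.inr ⟨le_rfl, ?_⟩)) corner
        hx'.le h0 (by ring)
      exact (le_div_iff₀ hx').2 (by linarith)
    by_cases hy : a 1 < 1
    · have hy' : 0 < 1 - a 1 := by linarith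
      have ha : a = (1 - a 1) • ![(a 0 - a 1) / (1 - a 1), 0] + a 1 • ![1, 1] := by
        ext i
        fin_cases i <;> simp [field]
      rw [ha]
      refine convex_convexHull ℝ S (subset_convexHull ℝ S (Or.inl (Or.inl ⟨?_, le_rfl⟩))) corner
        hy'.le h1 (by ring)
      exact (le_div_iff₀ hy').2 (by linarith)
    exact subset_convexHull ℝ S (Or.inl (Or.inr ⟨not_lt.1 hx, not_lt.1 hy⟩))

theorem finTwoArrow_symm_preimage_newtonRegion :
    (MeasurableEquiv.finTwoArrow (α := ℝ)).symm ⁻¹'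
      ({a : Fin 2 → ℝ | 0 ≤ a 0 ∧ 0 ≤ a 1} \ convexHull ℝ
        ({a : Fin 2 → ℝ | 3 ≤ a 0 ∧ 0 ≤ a 1} ∪ {a : Fin 2 → ℝ | 1 ≤ a 0 ∧ 1 ≤ a 1}
          ∪ {a : Fin 2 → ℝ | 0 ≤ a 0 ∧ 3 ≤ a 1}))
    = {p : ℝ × ℝ | p.1 ∈ Icc 0 3 ∧ p.2 ∈ Ico 0 (newtonBoundary p.1)} := by
  rw [convexHull_newtonPolygon]
  ext ⟨x, y⟩
  simp only [mem_preimage, MeasurableEquiv.finTwoArrow_symm_apply, mem_sdiff, mem_ofPred_eq,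
    Fin.cons_zero, Fin.cons_one, newtonBoundary, mem_Icc, mem_Ico, lt_max_iff]
  constructor
  · rintro ⟨⟨hx, hy⟩, h⟩
    by_cases h' : 3 ≤ x + 2 * y
    · have : 2 * x + y < 3 := by by_contra! h''; exact h ⟨hx, hy, h', h''⟩
      exact ⟨⟨hx, by linarith⟩, hy, Or.inl (by linarith)⟩
    · exact ⟨⟨hx, by linarith⟩, hy, Or.inr (by linarith)⟩
  · rintro ⟨⟨hx, -⟩, hy, h | h⟩ <;> exact ⟨⟨hx, hy⟩, fun h' => by linarith [h'.2.2.1, h'.2.2.2]⟩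

theorem integral_newtonBoundary {X Y : ℝ} (hX : 0 ≤ X) (hY : 0 ≤ Y) :
    ∫ x in (0 : ℝ)..3, (1 / (1 + X * x) ^ 2 - 1 / (1 + X * x + Y * newtonBoundary x) ^ 2)
      = 3 / (1 + 3 * X) - (1 / ((1 + 3 * Y) * (1 + X + Y)) + 2 / ((1 + X + Y) * (1 + 3 * X))) := by
  have hden : ∀ x ∈ uIcc (0 : ℝ) 3, 1 + X * x + Y * newtonBoundary x ≠ 0 := by
    intro x hx
    rw [uIcc_of_le (by norm_num)] at hx
    nlinarith [hx.1, newtonBoundary_nonneg hx.2]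
  have hint : ∀ a b, uIcc a b ⊆ uIcc (0 : ℝ) 3 →
      IntervalIntegrable (fun x => 1 / (1 + X * x + Y * newtonBoundary x) ^ 2) volume a b :=
    fun a b hab => ContinuousOn.intervalIntegrable <| continuousOn_const.div
      (by fun_prop) fun x hx => pow_ne_zero 2 (hden x (hab hx))
  have hleft : ∫ x in (0 : ℝ)..3, 1 / (1 + X * x) ^ 2 = 3 / (1 + 3 * X) := by
    rw [integral_one_div_affine_sq (by norm_num) (by linarith)]
    congr 1 <;> ring
  have hsteep : ∫ x in (0 : ℝ)..1, 1 / (1 + X * x + Y * newtonBoundary x) ^ 2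
      = 1 / ((1 + 3 * Y) * (1 + X + Y)) := by
    rw [intervalIntegral.integral_congr (g := fun x => 1 / ((1 + 3 * Y) + (X - 2 * Y) * x) ^ 2),
      integral_one_div_affine_sq (by linarith) (by linarith)]
    · congr 1 <;> ring
    · intro x hx
      rw [uIcc_of_le zero_le_one] at hx
      simp only [newtonBoundary_of_le_one hx.2]
      ring
  have hflat : ∫ x in (1 : ℝ)..3, 1 / (1 + X * x + Y * newtonBoundary x) ^ 2
      = 2 / ((1 + X + Y) * (1 + 3 * X)) := by
    rw [intervalIntegral.integral_congr (g := fun x => 1 / ((1 + 3 / 2 * Y) + (X - Y / 2) * x) ^ 2),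
      integral_one_div_affine_sq (by linarith) (by linarith)]
    · rw [show 1 + 3 / 2 * Y + (X - Y / 2) * 1 = 1 + X + Y by ring,
        show 1 + 3 / 2 * Y + (X - Y / 2) * 3 = 1 + 3 * X by ring]
      norm_num
    · intro x hx
      rw [uIcc_of_le (by norm_num)] at hx
      simp only [newtonBoundary_of_one_le hx.1]
      ring
  rw [intervalIntegral.integral_sub
      (intervalIntegrable_one_div_affine_sq (by norm_num) (by linarith)) (hint 0 3 le_rfl),
    hleft, ← intervalIntegral.integral_add_adjacent_intervals
      (hint 0 1 (uIcc_subset_uIcc (by norm_num [mem_uIcc]) (by norm_num [mem_uIcc])))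
      (hint 1 3 (uIcc_subset_uIcc (by norm_num [mem_uIcc]) (by norm_num [mem_uIcc]))),
    hsteep, hflat]

theorem integrableOn_newtonRegion {X Y : ℝ} (hX : 0 ≤ X) (hY : 0 ≤ Y) (C : ℝ) :
    IntegrableOn (fun p : ℝ × ℝ => C / (1 + p.1 * X + p.2 * Y) ^ 3)
      {p | p.1 ∈ Icc 0 3 ∧ p.2 ∈ Ico 0 (newtonBoundary p.1)} (volume.prod volume) := by
  refine (ContinuousOn.integrableOn_compact (isCompact_Icc.prod isCompact_Icc) ?_).mono_set
    (t := Icc 0 3 ×ˢ Icc 0 3) ?_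
  · refine continuousOn_const.div (by fun_prop) fun p ⟨hx, hy⟩ => pow_ne_zero 3 ?_
    exact (show 0 < 1 + p.1 * X + p.2 * Y by nlinarith [hx.1, hy.1]).ne'
  · rintro ⟨x, y⟩ ⟨hx, hy⟩
    exact ⟨hx, hy.1, hy.2.le.trans (newtonBoundary_le_three hx.1)⟩

theorem example_newton_region_integral (X₁ X₂ : ℝ) (h₁ : 0 < X₁) (h₂ : 0 < X₂)
    (N : Set (Fin 2 → ℝ))
    (hN : N = {a : Fin 2 → ℝ | 0 ≤ a 0 ∧ 0 ≤ a 1} \ convexHull ℝ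
      ({a : Fin 2 → ℝ | 3 ≤ a 0 ∧ 0 ≤ a 1} ∪ {a : Fin 2 → ℝ | 1 ≤ a 0 ∧ 1 ≤ a 1}
        ∪ {a : Fin 2 → ℝ | 0 ≤ a 0 ∧ 3 ≤ a 1})) :
    1 - ∫ a in N, ((Nat.factorial 2 : ℝ) * (X₁ * X₂)) / (1 + a 0 * X₁ + a 1 * X₂) ^ 3
    = 3 * X₂ / ((1 + 3 * X₁) * (1 + 3 * X₂)) + 1 / (1 + 3 * X₂)
      + 3 * X₁ * X₂ / ((1 + 3 * X₁) * (1 + X₁ + X₂) * (1 + 3 * X₂)) := by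
  subst hN
  rw [← ((volume_preserving_finTwoArrow ℝ).symm _).setIntegral_preimage_emb
    (MeasurableEquiv.measurableEmbedding _), finTwoArrow_symm_preimage_newtonRegion]
  simp only [MeasurableEquiv.finTwoArrow_symm_apply, Fin.cons_zero, Fin.cons_one]
  have hinner : ∀ x ∈ Icc (0 : ℝ) 3, ∫ y in Ico 0 (newtonBoundary x),
      (Nat.factorial 2 : ℝ) * (X₁ * X₂) / (1 + x * X₁ + y * X₂) ^ 3
      = X₁ * (1 / (1 + X₁ * x) ^ 2 - 1 / (1 + X₁ * x + X₂ * newtonBoundary x) ^ 2) := by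
    intro x hx
    rw [← setIntegral_Ico_two_mul_div_affine_cube (by nlinarith [hx.1]) h₂.le
      (newtonBoundary_nonneg hx.2), ← integral_const_mul]
    congr 1
    funext y
    simp only [Nat.factorial]
    ring
  rw [Measure.volume_eq_prod, setIntegral_region_between_co measurable_const
      continuous_newtonBoundary.measurable measurableSet_Icc
      (integrableOn_newtonRegion h₁.le h₂.le _),
    setIntegral_congr_fun measurableSet_Icc hinner, integral_Icc_eq_integral_Ioc,
    ← intervalIntegral.integral_of_le (by norm_num), intervalIntegral.integral_const_mul, integral_newtonBoundary h₁.le h₂.le]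
  field_simp
  ring
end

section
/- In $\mathbb{R}^3$ with coordinates $(a_0,a_1,a_2)$, let $\hat{\underline v}_0 = (3,3,0)$, $\hat{\underline v}_1 = (2,1,1)$, $\hat{\underline v}_2 = (3,0,3)$ be the lifts to the plane $H: a_0 = a_1+a_2$ of $\underline v_0=(3,0)$, $\underline v_1=(1,1)$, $\underline v_2=(0,3)$. Then the five simplices with vertex sets (finite vertices listed, infinite vertices as coordinate directions) $\{\hat{\underline v}_0,\hat{\underline v}_1,\hat{\underline v}_2; e_1\}$, $\{\hat{\underline v}_1,\hat{\underline v}_2; e_1,e_2\}$, $\{\hat{\underline v}_0,\hat{\underline v}_1,\hat{\underline v}_2; e_0\}$, $\{\hat{\underline v}_0,\hat{\underline v}_2; e_1,e_0\}$, $\{\hat{\underline v}_2; e_1,e_2,e_0\}$ have pairwise disjoint interiors and their union is the region $\hat N' = \mathrm{conv}(\{\hat{\underline v}_0,\hat{\underline v}_1,\hat{\underline v}_2\}) + \mathbb{R}^3_{\geq 0}$. -/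
open Pointwise

/-- The simplex with finite vertices `fv` and infinite vertices in the
directions `dirs`. -/
def simplexWithDirections {k m : ℕ} (fv : Fin k → Fin 3 → ℝ)
    (dirs : Fin m → Fin 3 → ℝ) : Set (Fin 3 → ℝ) :=
  {a | ∃ (l : Fin k → ℝ) (μ : Fin m → ℝ),
    (∀ i, 0 ≤ l i) ∧ (∀ j, 0 ≤ μ j) ∧ ∑ i, l i = 1 ∧
    a = (∑ i, l i • fv i) + ∑ j, μ j • dirs j}

/-!
Each simplex lies in `N̂'`, since its finite vertices are among the `v̂ᵢ` and its directions are
nonnegative. Any two of the simplices lie on opposite sides of one of the planes `a₀ = 3`,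
`2a₀ - a₂ = 3`, `a₀ = a₁ + a₂`, `a₁ + a₂ = 3`, `a₂ = 3`, so their interiors are disjoint.
Conversely, every point of `N̂'` satisfies the seven facet inequalities of `nHatPolyhedron`
(each holds at the three vertices and has a nonnegative normal), and cutting that polyhedron
along the same planes puts each of its points into one of the simplices, with explicit
barycentric coordinates.
-/

open Matrix Set Filter Topology

section Halfspaces

variable {ι : Type*} [Fintype ι]

theorem dotProduct_lt_of_mem_interior {s : Set (ι → ℝ)} {w : ι → ℝ} {c : ℝ}
    (hw : w ≠ 0) (hs : ∀ y ∈ s, w ⬝ᵥ y ≤ c) {x : ι → ℝ} (hx : x ∈ interior s) : w ⬝ᵥ x < c := by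
  have hpath : Tendsto (fun δ : ℝ => x + δ • w) (𝓝[>] 0) (𝓝 x) := by
    have : Continuous fun δ : ℝ => x + δ • w := by fun_prop
    simpa using this.continuousWithinAt.tendsto (x := 0) (s := Ioi 0)
  obtain ⟨δ, hδs, hδ⟩ :=
    ((hpath.eventually (mem_interior_iff_mem_nhds.mp hx)).and self_mem_nhdsWithin).exists
  have hww : 0 < w ⬝ᵥ w := by simpa using dotProduct_self_star_pos_iff.mpr hw
  have hle := hs _ hδs
  rw [dotProduct_add, dotProduct_smul, smul_eq_mul] at hle
  nlinarith

theorem interior_inter_interior_eq_empty_of_separated {s t : Set (ι → ℝ)} {w : ι → ℝ}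
    {c : ℝ} (hw : w ≠ 0) (hs : ∀ x ∈ s, w ⬝ᵥ x ≤ c) (ht : ∀ x ∈ t, c ≤ w ⬝ᵥ x) :
    interior s ∩ interior t = ∅ := by
  refine eq_empty_of_forall_notMem fun x ⟨hxs, hxt⟩ => ?_
  have hlt := dotProduct_lt_of_mem_interior hw hs hxs
  have hgt := dotProduct_lt_of_mem_interior (neg_ne_zero.mpr hw) (c := -c)
    (fun y hy => by simpa [neg_dotProduct] using ht y hy) hxt
  rw [neg_dotProduct] at hgt
  linarith

theorem le_dotProduct_of_mem_convexHull_add_nonneg {V : Set (ι → ℝ)} {w : ι → ℝ} {c : ℝ}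
    (hw : 0 ≤ w) (hV : ∀ v ∈ V, c ≤ w ⬝ᵥ v) {x : ι → ℝ}
    (hx : x ∈ convexHull ℝ V + {a | ∀ i, 0 ≤ a i}) : c ≤ w ⬝ᵥ x := by
  obtain ⟨y, hy, p, hp, rfl⟩ := hx
  have hcy : c ≤ w ⬝ᵥ y :=
    convexHull_min hV (convex_halfSpace_ge (dotProductBilin ℝ ℝ w).isLinear c) hy
  have hwp : 0 ≤ w ⬝ᵥ p := dotProduct_nonneg_of_nonneg hw hp
  rw [dotProduct_add]
  linarith

end Halfspaces

section SimplexWithDirections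

variable {k m : ℕ} {fv : Fin k → Fin 3 → ℝ} {dirs : Fin m → Fin 3 → ℝ}

theorem simplexWithDirections_subset_convexHull_add_nonneg {V : Set (Fin 3 → ℝ)}
    (hfv : ∀ i, fv i ∈ V) (hdirs : ∀ j, 0 ≤ dirs j) :
    simplexWithDirections fv dirs ⊆ convexHull ℝ V + {a | ∀ i, 0 ≤ a i} := by
  rintro _ ⟨l, μ, hl, hμ, hsum, rfl⟩
  refine add_mem_add ((convex_convexHull ℝ V).sum_mem (fun i _ => hl i) hsum
    fun i _ => subset_convexHull ℝ V (hfv i)) fun i => ?_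
  simp only [Finset.sum_apply, Pi.smul_apply, smul_eq_mul]
  exact Finset.sum_nonneg fun j _ => mul_nonneg (hμ j) (hdirs j i)

theorem le_dotProduct_of_mem_simplexWithDirections {w : Fin 3 → ℝ} {c : ℝ}
    (hfv : ∀ i, c ≤ w ⬝ᵥ fv i) (hdirs : ∀ j, 0 ≤ w ⬝ᵥ dirs j) :
    ∀ a ∈ simplexWithDirections fv dirs, c ≤ w ⬝ᵥ a := by
  rintro _ ⟨l, μ, hl, hμ, hsum, rfl⟩
  simp only [dotProduct_add, dotProduct_sum, dotProduct_smul, smul_eq_mul]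
  have hvert : c ≤ ∑ i, l i * (w ⬝ᵥ fv i) := calc
    c = ∑ i, l i * c := by rw [← Finset.sum_mul, hsum, one_mul]
    _ ≤ ∑ i, l i * (w ⬝ᵥ fv i) :=
      Finset.sum_le_sum fun i _ => mul_le_mul_of_nonneg_left (hfv i) (hl i)
  have hray : 0 ≤ ∑ j, μ j * (w ⬝ᵥ dirs j) :=
    Finset.sum_nonneg fun j _ => mul_nonneg (hμ j) (hdirs j)
  linarith

theorem interior_inter_interior_simplexWithDirections_eq_empty {k' m' : ℕ}
    {fv' : Fin k' → Fin 3 → ℝ} {dirs' : Fin m' → Fin 3 → ℝ} {w : Fin 3 → ℝ} {c : ℝ}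
    (hw : w ≠ 0) (hfv : ∀ i, w ⬝ᵥ fv i ≤ c) (hdirs : ∀ j, w ⬝ᵥ dirs j ≤ 0)
    (hfv' : ∀ i, c ≤ w ⬝ᵥ fv' i) (hdirs' : ∀ j, 0 ≤ w ⬝ᵥ dirs' j) :
    interior (simplexWithDirections fv dirs) ∩ interior (simplexWithDirections fv' dirs') =
      ∅ := by
  refine interior_inter_interior_eq_empty_of_separated hw (fun a ha => ?_)
    (le_dotProduct_of_mem_simplexWithDirections hfv' hdirs')
  simpa [neg_dotProduct] using le_dotProduct_of_mem_simplexWithDirections (w := -w) (c := -c)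
    (fun i => by simpa [neg_dotProduct] using hfv i)
    (fun j => by simpa [neg_dotProduct] using hdirs j) a ha

end SimplexWithDirections

def nHat' : Set (Fin 3 → ℝ) :=
  convexHull ℝ {(![3,3,0] : Fin 3 → ℝ), ![2,1,1], ![3,0,3]} + {a : Fin 3 → ℝ | ∀ i, 0 ≤ a i}

def nHatSimplex : Fin 5 → Set (Fin 3 → ℝ) := ![
  simplexWithDirections ![![3,3,0], ![2,1,1], ![3,0,3]] ![![0,1,0]],
  simplexWithDirections ![![2,1,1], ![3,0,3]] ![![0,1,0], ![0,0,1]],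
  simplexWithDirections ![![3,3,0], ![2,1,1], ![3,0,3]] ![![1,0,0]],
  simplexWithDirections ![![3,3,0], ![3,0,3]] ![![0,1,0], ![1,0,0]],
  simplexWithDirections ![![3,0,3]] ![![0,1,0], ![0,0,1], ![1,0,0]]]

def nHatPolyhedron : Set (Fin 3 → ℝ) :=
  {a | 2 ≤ a 0 ∧ 0 ≤ a 1 ∧ 0 ≤ a 2 ∧ 3 ≤ a 0 + a 1 ∧ 3 ≤ a 0 + a 2 ∧
    3 ≤ 2 * a 1 + a 2 ∧ 3 ≤ a 1 + 2 * a 2}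

theorem interior_nHatSimplex_inter_eq_empty_of_lt {i j : Fin 5} (hij : i < j) :
    interior (nHatSimplex i) ∩ interior (nHatSimplex j) = ∅ := by
  fin_cases i <;> fin_cases j <;> simp at hij <;>
  -- `done` makes a plane that does not separate the pair fall through to the next one.
  first
  | refine interior_inter_interior_simplexWithDirections_eq_empty (w := ![1,0,0]) (c := 3)
      (by simp) ?_ ?_ ?_ ?_ <;>
    norm_num [Fin.forall_fin_succ, dotProduct, Fin.sum_univ_succ] <;> done
  | refine interior_inter_interior_simplexWithDirections_eq_empty (w := ![-2,0,1]) (c := -3)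
      (by simp) ?_ ?_ ?_ ?_ <;>
    norm_num [Fin.forall_fin_succ, dotProduct, Fin.sum_univ_succ] <;> done
  | refine interior_inter_interior_simplexWithDirections_eq_empty (w := ![2,0,-1]) (c := 3)
      (by simp) ?_ ?_ ?_ ?_ <;>
    norm_num [Fin.forall_fin_succ, dotProduct, Fin.sum_univ_succ] <;> done
  | refine interior_inter_interior_simplexWithDirections_eq_empty (w := ![1,-1,-1]) (c := 0)
      (by simp) ?_ ?_ ?_ ?_ <;>
    norm_num [Fin.forall_fin_succ, dotProduct, Fin.sum_univ_succ] <;> done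
  | refine interior_inter_interior_simplexWithDirections_eq_empty (w := ![0,1,1]) (c := 3)
      (by simp) ?_ ?_ ?_ ?_ <;>
    norm_num [Fin.forall_fin_succ, dotProduct, Fin.sum_univ_succ] <;> done
  | refine interior_inter_interior_simplexWithDirections_eq_empty (w := ![0,0,1]) (c := 3)
      (by simp) ?_ ?_ ?_ ?_ <;>
    norm_num [Fin.forall_fin_succ, dotProduct, Fin.sum_univ_succ]

theorem interior_nHatSimplex_inter_eq_empty {i j : Fin 5} (hij : i ≠ j) :
    interior (nHatSimplex i) ∩ interior (nHatSimplex j) = ∅ := by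
  rcases hij.lt_or_gt with h | h
  · exact interior_nHatSimplex_inter_eq_empty_of_lt h
  · rw [inter_comm]
    exact interior_nHatSimplex_inter_eq_empty_of_lt h

theorem iUnion_nHatSimplex_subset_nHat' : ⋃ i, nHatSimplex i ⊆ nHat' :=
  iUnion_subset fun i => by
    fin_cases i <;> refine simplexWithDirections_subset_convexHull_add_nonneg ?_ ?_ <;>
      intro k <;> fin_cases k <;> simp [Pi.le_def, Fin.forall_fin_succ]

theorem nHat'_subset_nHatPolyhedron : nHat' ⊆ nHatPolyhedron := by
  intro a ha
  have facet (w : Fin 3 → ℝ) (c : ℝ) (hw : 0 ≤ w)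
      (hV : ∀ v ∈ ({![3,3,0], ![2,1,1], ![3,0,3]} : Set (Fin 3 → ℝ)), c ≤ w ⬝ᵥ v) :
      c ≤ w ⬝ᵥ a :=
    le_dotProduct_of_mem_convexHull_add_nonneg hw hV ha
  have h₁ := facet ![1,0,0] 2
  have h₂ := facet ![0,1,0] 0
  have h₃ := facet ![0,0,1] 0
  have h₄ := facet ![1,1,0] 3
  have h₅ := facet ![1,0,1] 3
  have h₆ := facet ![0,2,1] 3
  have h₇ := facet ![0,1,2] 3
  simp [Pi.le_def, Fin.forall_fin_succ, dotProduct, Fin.sum_univ_three] at h₁ h₂ h₃ h₄ h₅ h₆ h₇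
  norm_num at h₁ h₄ h₅ h₆ h₇
  exact ⟨h₁, h₂, h₃, h₄, h₅, h₆, h₇⟩

section Barycentric

/- The hypotheses say exactly that the coefficients solving `a = ∑ lᵢ v̂ᵢ + ∑ μⱼ eⱼ` for the
given simplex are nonnegative. -/

variable {a : Fin 3 → ℝ}

theorem mem_nHatSimplex_zero (h₁ : a 0 ≤ a 1 + a 2) (h₂ : a 0 ≤ 3) (h₃ : 3 ≤ a 0 + a 2)
    (h₄ : 3 ≤ 2 * a 0 - a 2) : a ∈ nHatSimplex 0 := by
  refine ⟨![(2 * a 0 - a 2 - 3) / 3, 3 - a 0, (a 0 + a 2 - 3) / 3], ![a 1 + a 2 - a 0],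
    ?_, ?_, ?_, ?_⟩
  · intro i; fin_cases i <;> simp <;> linarith
  · intro j; fin_cases j; simp; linarith
  · norm_num [Fin.sum_univ_succ]; ring
  · ext i; fin_cases i <;> simp [Fin.sum_univ_succ] <;> ring

theorem mem_nHatSimplex_one (h₁ : 2 ≤ a 0) (h₂ : a 0 ≤ 3) (h₃ : 3 ≤ a 0 + a 1)
    (h₄ : 2 * a 0 - a 2 ≤ 3) : a ∈ nHatSimplex 1 := by
  refine ⟨![3 - a 0, a 0 - 2], ![a 0 + a 1 - 3, a 2 + 3 - 2 * a 0], ?_, ?_, ?_, ?_⟩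
  · intro i; fin_cases i <;> simp <;> linarith
  · intro j; fin_cases j <;> simp <;> linarith
  · norm_num [Fin.sum_univ_succ]
  · ext i; fin_cases i <;> simp [Fin.sum_univ_succ] <;> ring

theorem mem_nHatSimplex_two (h₁ : a 1 + a 2 ≤ a 0) (h₂ : a 1 + a 2 ≤ 3)
    (h₃ : 3 ≤ 2 * a 1 + a 2) (h₄ : 3 ≤ a 1 + 2 * a 2) : a ∈ nHatSimplex 2 := by
  refine ⟨![(2 * a 1 + a 2 - 3) / 3, 3 - a 1 - a 2, (a 1 + 2 * a 2 - 3) / 3],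
    ![a 0 - a 1 - a 2], ?_, ?_, ?_, ?_⟩
  · intro i; fin_cases i <;> simp <;> linarith
  · intro j; fin_cases j; simp; linarith
  · norm_num [Fin.sum_univ_succ]; ring
  · ext i; fin_cases i <;> simp [Fin.sum_univ_succ] <;> ring

theorem mem_nHatSimplex_three (h₁ : 3 ≤ a 0) (h₂ : 3 ≤ a 1 + a 2) (h₃ : 0 ≤ a 2)
    (h₄ : a 2 ≤ 3) : a ∈ nHatSimplex 3 := by
  refine ⟨![1 - a 2 / 3, a 2 / 3], ![a 1 + a 2 - 3, a 0 - 3], ?_, ?_, ?_, ?_⟩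
  · intro i; fin_cases i <;> simp <;> linarith
  · intro j; fin_cases j <;> simp <;> linarith
  · norm_num [Fin.sum_univ_succ]
  · ext i; fin_cases i <;> simp [Fin.sum_univ_succ] <;> ring

theorem mem_nHatSimplex_four (h₁ : 3 ≤ a 0) (h₂ : 0 ≤ a 1) (h₃ : 3 ≤ a 2) :
    a ∈ nHatSimplex 4 := by
  refine ⟨![1], ![a 1, a 2 - 3, a 0 - 3], ?_, ?_, ?_, ?_⟩
  · intro i; fin_cases i; simp
  · intro j; fin_cases j <;> simp <;> linarith
  · norm_num [Fin.sum_univ_succ]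
  · ext i; fin_cases i <;> simp [Fin.sum_univ_succ]

end Barycentric

theorem nHatPolyhedron_subset_iUnion_nHatSimplex : nHatPolyhedron ⊆ ⋃ i, nHatSimplex i := by
  rintro a ⟨h₁, h₂, h₃, h₄, h₅, h₆, h₇⟩
  rw [mem_iUnion]
  rcases le_total (a 0) 3 with hle | hge
  · rcases le_total (2 * a 0 - a 2) 3 with h | h
    · exact ⟨1, mem_nHatSimplex_one h₁ hle h₄ h⟩
    rcases le_total (a 0) (a 1 + a 2) with h' | h'
    · exact ⟨0, mem_nHatSimplex_zero h' hle h₅ h⟩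
    · exact ⟨2, mem_nHatSimplex_two h' (by linarith) h₆ h₇⟩
  · rcases le_total 3 (a 2) with h | h
    · exact ⟨4, mem_nHatSimplex_four hge h₂ h⟩
    rcases le_total 3 (a 1 + a 2) with h' | h'
    · exact ⟨3, mem_nHatSimplex_three hge h' h₃ h⟩
    · exact ⟨2, mem_nHatSimplex_two (by linarith) h' h₆ h₇⟩

theorem example_triangulation_of_Nhat' (S : Fin 5 → Set (Fin 3 → ℝ))
    (hS : S = ![
      simplexWithDirections ![![3,3,0], ![2,1,1], ![3,0,3]] ![![0,1,0]],
      simplexWithDirections ![![2,1,1], ![3,0,3]] ![![0,1,0], ![0,0,1]],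
      simplexWithDirections ![![3,3,0], ![2,1,1], ![3,0,3]] ![![1,0,0]],
      simplexWithDirections ![![3,3,0], ![3,0,3]] ![![0,1,0], ![1,0,0]],
      simplexWithDirections ![![3,0,3]] ![![0,1,0], ![0,0,1], ![1,0,0]]]) :
    (∀ i j, i ≠ j → interior (S i) ∩ interior (S j) = ∅) ∧
    (⋃ i, S i) = convexHull ℝ {(![3,3,0] : Fin 3 → ℝ), ![2,1,1], ![3,0,3]}
      + {a : Fin 3 → ℝ | ∀ i, 0 ≤ a i} := by
  subst hS
  exact ⟨fun i j => interior_nHatSimplex_inter_eq_empty,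
    iUnion_nHatSimplex_subset_nHat'.antisymm
      (nHat'_subset_nHatPolyhedron.trans nHatPolyhedron_subset_iUnion_nHatSimplex)⟩
end
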